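/- arXiv:math/0311430 — 3 statements merged into one kernel-verified Lean document; each statement's English description precedes it below -/
import Mathlib

section
/- Let L be a finite meet-semilattice, G a building set in L with G₀ ∈ G such that H := G \ {G₀} is also a building set. If S is an H-nested set not containing F_H(G₀), then S is G-nested. -/
open scoped BigOperators

variable {L : Type*}

/-- The set of maximal elements of `G` below `X` (the `G`-factors of `X`). -/
def factorsSet [PartialOrder L] (G : Set L) (X : L) : Set L :=
  {g | g ∈ G ∧ g ≤ X ∧ ∀ h ∈ G, h ≤ X → g ≤ h → g = h}

/-- `G` is a building set in the meet-semilattice `L` with minimal element `⊥`: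
every element of `G` is nonminimal, and for every `X ≠ ⊥` there is a poset
isomorphism from the product of the lower intervals of the factors of `X`
to the lower interval of `X`, sending the `g`-th "unit vector" to `g`. -/
def IsBuilding (L : Type*) [PartialOrder L] [OrderBot L] (G : Set L) : Prop :=
  (∀ g ∈ G, g ≠ ⊥) ∧
  ∀ X : L, X ≠ ⊥ →
    ∃ φ : ((g : factorsSet G X) → Set.Icc (⊥ : L) g.1) ≃o Set.Icc (⊥ : L) X,
      ∀ (g : factorsSet G X) (u : (h : factorsSet G X) → Set.Icc (⊥ : L) h.1),
        (u g : L) = g.1 → (∀ h, h ≠ g → (u h : L) = (⊥ : L)) → ((φ u : L) = g.1)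

/-- A finite subset `S ⊆ G` is nested: every antichain in `S` of size at least 2
has a least upper bound in `L` which does not belong to `G`. -/
def IsNested [PartialOrder L] (G : Set L) (S : Finset L) : Prop :=
  ↑S ⊆ G ∧ ∀ A : Finset L, A ⊆ S → IsAntichain (· ≤ ·) (A : Set L) → 2 ≤ A.card →
    ∃ j, IsLUB (A : Set L) j ∧ j ∉ G

/-- The nested set complex, as the collection of its faces. -/
def nestedComplex [PartialOrder L] (G : Set L) : Set (Finset L) := {S | IsNested G S}

/-- The order complex of a poset: the collection of finite chains. -/
def chainComplex (V : Type*) [Preorder V] : Set (Finset V) :=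
  {S | IsChain (· ≤ ·) (S : Set V)}

/-- The order complex of `L \ {⊥}`, with vertex set inside `L`. -/
def orderComplexBot (L : Type*) [PartialOrder L] [OrderBot L] : Set (Finset L) :=
  {S | (S : Set L) ⊆ {x | x ≠ ⊥} ∧ IsChain (· ≤ ·) (S : Set L)}

/-- Geometric realization of an abstract simplicial complex (given by its set of
faces, as finsets of the vertex type `V`): convex combinations of vertices
supported on a face. -/
abbrev geomReal {V : Type*} (K : Set (Finset V)) : Type _ :=
  {f : V → ℝ // (∀ v, 0 ≤ f v) ∧ ∃ s ∈ K, (∀ v, f v ≠ 0 → v ∈ s) ∧ ∑ v ∈ s, f v = 1}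

/-- The subposet of the face poset of the nested set complex consisting of the
nonempty nested sets whose join is `≤ X`. -/
def NestedFiber [PartialOrder L] (G : Set L) (X : L) :=
  {S : Finset L // IsNested G S ∧ S.Nonempty ∧ ∃ j, IsLUB (S : Set L) j ∧ j ≤ X}

instance [PartialOrder L] (G : Set L) (X : L) : PartialOrder (NestedFiber G X) := by
  unfold NestedFiber; infer_instance

/-- The face poset of the nested set complex: nonempty nested sets ordered by inclusion. -/
def NestedFaces [PartialOrder L] (G : Set L) :=
  {S : Finset L // IsNested G S ∧ S.Nonempty}

instance [PartialOrder L] (G : Set L) : PartialOrder (NestedFaces G) := by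
  unfold NestedFaces; infer_instance

/-- The combinatorial blowup of a poset `M` at `X`: elements `Y` (marked `false`)
with `Y ≱ X`, and elements `Ŷ` (marked `true`) with `Y ≱ X` such that `Y ∨ X`
exists; ordered by `Y ≺ Z` iff `Y < Z`, `Ŷ ≺ Ẑ` iff `Y < Z`, `Y ≺ Ẑ` iff `Y ≤ Z`. -/
def Bl {M : Type*} [PartialOrder M] (X : M) :=
  {p : M × Bool // ¬ X ≤ p.1 ∧ (p.2 = true → ∃ j, IsLUB {p.1, X} j)}

noncomputable instance {M : Type*} [PartialOrder M] (X : M) : PartialOrder (Bl X) := by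
  unfold Bl; infer_instance

/-- The atoms of `L`, used as coordinates for the realization of nested set fans. -/
def Atoms (L : Type*) [PartialOrder L] [OrderBot L] := {a : L // IsAtom a}

open Classical in
/-- The characteristic vector of the set of atoms below `X`. -/
noncomputable def charVec [PartialOrder L] [OrderBot L] (X : L) : Atoms L → ℝ :=
  fun a => if a.1 ≤ X then 1 else 0

/-- The polyhedral cone spanned by the characteristic vectors of elements of `S`. -/
noncomputable def coneOf [PartialOrder L] [OrderBot L] (S : Finset L) : Set (Atoms L → ℝ) :=
  {y | ∃ c : L → ℝ, (∀ x, 0 ≤ c x) ∧ y = ∑ x ∈ S, c x • charVec x}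

/-- The fan associated to a building set: the cones spanned by the nested sets. -/
def fanOf [PartialOrder L] [OrderBot L] (G : Set L) : Set (Set (Atoms L → ℝ)) :=
  {C | ∃ S : Finset L, IsNested G S ∧ C = coneOf S}

/-- The cone generated by a ray `v` together with a cone `c`. -/
def rayJoin {E : Type*} [AddCommMonoid E] [Module ℝ E] (v : E) (c : Set E) : Set E :=
  {y | ∃ a : ℝ, ∃ x ∈ c, 0 ≤ a ∧ y = a • v + x}

/-- The stellar subdivision of a fan `F` at the cone `σ` with new ray `v`:
cones not containing `σ` are kept, and each cone `τ ⊇ σ` is replaced by the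
joins of `v` with the faces of `τ` not containing `σ`. -/
def stellarSub {E : Type*} [AddCommMonoid E] [Module ℝ E]
    (F : Set (Set E)) (σ : Set E) (v : E) : Set (Set E) :=
  {τ | τ ∈ F ∧ ¬ σ ⊆ τ} ∪
  {D | ∃ τ ∈ F, σ ⊆ τ ∧ ∃ c ∈ F, c ⊆ τ ∧ ¬ σ ⊆ c ∧ D = rayJoin v c}

/-!
If an antichain `A ⊆ S` with `|A| ≥ 2` had its join in `G`, then by `H`-nestedness that join
is `G₀`. Under the building-set isomorphism `[⊥, G₀] ≅ ∏_{g ∈ F_H(G₀)} [⊥, g]` every element of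
`H` below `G₀` lies on the axis of a single factor, so the elements of `A` below a factor `g`
have join `g ∈ H`. Nestedness then forces them to be just `g`, hence `A = F_H(G₀) ⊆ S`.
-/

open Set

lemma exists_mem_factorsSet_ge [PartialOrder L] [Finite L] {H : Set L} {X a : L}
    (ha : a ∈ H) (haX : a ≤ X) : ∃ g ∈ factorsSet H X, a ≤ g := by
  obtain ⟨g, hag, hmax⟩ := (toFinite {h | h ∈ H ∧ h ≤ X}).exists_le_maximal ⟨ha, haX⟩
  exact ⟨g, ⟨hmax.prop.1, hmax.prop.2, fun h hh hhX hgh => hmax.eq_of_le ⟨hh, hhX⟩ hgh⟩, hag⟩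

lemma isLUB_coe_Icc_iff [SemilatticeInf L] [OrderBot L] {X : L} {s : Set (Icc ⊥ X)}
    {x : Icc ⊥ X} : IsLUB (Subtype.val '' s) (x : L) ↔ IsLUB s x := by
  refine ⟨fun h => ⟨fun y hy => h.1 (mem_image_of_mem _ hy), fun b hb => h.2 ?_⟩,
    fun h => ⟨?_, fun b hb => ?_⟩⟩
  · rintro _ ⟨y, hy, rfl⟩
    exact hb hy
  · rintro _ ⟨y, hy, rfl⟩
    exact h.1 hy
  · have hbX : (⟨b ⊓ X, bot_le, inf_le_right⟩ : Icc ⊥ X) ∈ upperBounds s := fun y hy =>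
      le_inf (hb (mem_image_of_mem _ hy)) y.2.2
    exact (show (x : L) ≤ b ⊓ X from h.2 hbX).trans inf_le_left

lemma isLUB_of_isLUB_pi {ι : Type*} {α : ι → Type*} [∀ i, Preorder (α i)]
    {s s' : Set (∀ i, α i)} {t u : ∀ i, α i} {i : ι} (ht : IsLUB s t)
    (hs'u : ∀ v ∈ s', v ≤ u) (hrest : ∀ v ∈ s \ s', IsBot (v i)) (hui : u i ≤ t i)
    (hu : ∀ j ≠ i, IsBot (u j)) : IsLUB s' u := by
  refine ⟨hs'u, fun w hw j => ?_⟩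
  by_cases hj : j = i
  · subst hj
    refine hui.trans ((isLUB_pi.1 ht j).2 ?_)
    rintro _ ⟨v, hv, rfl⟩
    by_cases hvs' : v ∈ s'
    · exact hw hvs' j
    · exact hrest v ⟨hv, hvs'⟩ (w j)
  · exact hu j hj (w j)

open Classical in
noncomputable def unitVec [PartialOrder L] [OrderBot L] {H : Set L} {X : L}
    (g : factorsSet H X) : (h : factorsSet H X) → Icc (⊥ : L) h.1 :=
  fun h => if h = g then ⟨h.1, bot_le, le_rfl⟩ else ⟨⊥, bot_le, bot_le⟩

section unitVec

variable [PartialOrder L] [OrderBot L] {H : Set L} {X : L}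

lemma unitVec_self (g : factorsSet H X) : (unitVec g g : L) = g.1 := by
  simp [unitVec]

lemma unitVec_of_ne {g h : factorsSet H X} (hh : h ≠ g) : (unitVec g h : L) = ⊥ := by
  simp [unitVec, hh]

lemma isBot_unitVec_of_ne {g h : factorsSet H X} (hh : h ≠ g) : IsBot (unitVec g h) :=
  fun y => by
    change (unitVec g h : L) ≤ y
    rw [unitVec_of_ne hh]
    exact y.2.1

end unitVec

lemma symm_apply_factor_eq_unitVec [PartialOrder L] [OrderBot L] {H : Set L}
    {X : L} {φ : ((g : factorsSet H X) → Icc (⊥ : L) g.1) ≃o Icc (⊥ : L) X}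
    (hφ : ∀ (g : factorsSet H X) (u : (h : factorsSet H X) → Icc (⊥ : L) h.1),
      (u g : L) = g.1 → (∀ h, h ≠ g → (u h : L) = ⊥) → (φ u : L) = g.1)
    (g : factorsSet H X) : φ.symm ⟨g, bot_le, g.2.2.1⟩ = unitVec g :=
  φ.symm_apply_eq.2 (Subtype.ext (hφ g _ (unitVec_self g) fun _ => unitVec_of_ne).symm)

lemma IsBuilding.isLUB_sep_le_of_mem_factorsSet [SemilatticeInf L] [OrderBot L] [Finite L]
    {H : Set L} (hH : IsBuilding L H) {X : L} (hX : X ≠ ⊥) {A : Set L} (hAH : A ⊆ H)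
    (hA : IsLUB A X) {g : L} (hg : g ∈ factorsSet H X) : IsLUB {a ∈ A | a ≤ g} g := by
  obtain ⟨φ, hφ⟩ := hH.2 X hX
  have hunit := symm_apply_factor_eq_unitVec hφ
  have hAX : A ⊆ Icc ⊥ X := fun a ha => ⟨bot_le, hA.1 ha⟩
  have hA' : IsLUB (φ.symm '' (Subtype.val ⁻¹' A)) (φ.symm ⟨X, bot_le, le_rfl⟩) :=
    φ.symm.isLUB_image'.2 <| isLUB_coe_Icc_iff.1 <| by
      rwa [Subtype.image_preimage_coe, inter_eq_right.2 hAX]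
  have hB' : IsLUB (φ.symm '' (Subtype.val ⁻¹' {a ∈ A | a ≤ g})) (unitVec ⟨g, hg⟩) := by
    refine isLUB_of_isLUB_pi hA' ?_ ?_ ?_ fun _ => isBot_unitVec_of_ne
    · rintro _ ⟨a, ha, rfl⟩
      rw [← hunit]
      exact φ.symm.monotone ha.2
    · rintro _ ⟨⟨a, ha, rfl⟩, hnot⟩
      have hag : ¬ (a : L) ≤ g := fun h => hnot ⟨a, ⟨ha, h⟩, rfl⟩
      obtain ⟨f, hf, haf⟩ := exists_mem_factorsSet_ge (hAH ha) a.2.2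
      have hfg : (⟨f, hf⟩ : factorsSet H X) ≠ ⟨g, hg⟩ := fun h => hag (by simp_all)
      have hle : φ.symm a ≤ unitVec ⟨f, hf⟩ := hunit ⟨f, hf⟩ ▸ φ.symm.monotone haf
      exact (isBot_unitVec_of_ne hfg.symm).mono (hle _)
    · rw [← hunit]
      exact φ.symm.monotone hg.2.1 _
  rw [← hunit, φ.symm.isLUB_image', ← isLUB_coe_Icc_iff, Subtype.image_preimage_coe,
    inter_eq_right.2 fun a ha => hAX ha.1] at hB'
  exact hB'

lemma IsBuilding.coe_eq_factorsSet_of_isLUB [SemilatticeInf L] [OrderBot L] [Finite L]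
    {H : Set L} (hH : IsBuilding L H) {S A : Finset L} (hS : IsNested H S) (hAS : A ⊆ S)
    (hanti : IsAntichain (· ≤ ·) (A : Set L)) {X : L} (hX : X ≠ ⊥)
    (hlub : IsLUB (A : Set L) X) : (A : Set L) = factorsSet H X := by
  classical
  have hAH : (A : Set L) ⊆ H := fun a ha => hS.1 (hAS ha)
  have hfactors : factorsSet H X ⊆ A := by
    intro g hg
    set B := A.filter (· ≤ g)
    have hB : IsLUB (B : Set L) g := by
      simpa [B] using hH.isLUB_sep_le_of_mem_factorsSet hX hAH hlub hg
    have hB_nonempty : B.Nonempty := by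
      by_contra h
      rw [Finset.not_nonempty_iff_eq_empty.1 h, Finset.coe_empty, isLUB_empty_iff] at hB
      exact hH.1 g hg.1 (isBot_iff_eq_bot.1 hB)
    have hB_card : B.card < 2 := by
      by_contra h
      obtain ⟨j, hj, hjH⟩ := hS.2 B ((Finset.filter_subset _ _).trans hAS)
        (hanti.subset (Finset.coe_subset.2 (Finset.filter_subset _ _))) (not_lt.1 h)
      exact hjH (hj.unique hB ▸ hg.1)
    obtain ⟨a, haB⟩ : ∃ a, B = {a} :=
      Finset.card_eq_one.1 (by have := hB_nonempty.card_pos; omega)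
    rw [haB, Finset.coe_singleton] at hB
    rw [← isLUB_singleton.unique hB]
    exact (Finset.mem_filter.1 (haB ▸ Finset.mem_singleton_self a)).1
  refine Subset.antisymm (fun a ha => ?_) hfactors
  obtain ⟨g, hg, hag⟩ := exists_mem_factorsSet_ge (hAH ha) (hlub.1 ha)
  rwa [hanti.eq ha (hfactors hg) hag]

theorem stmt14_general (L : Type*) [SemilatticeInf L] [OrderBot L] [Fintype L]
    (G : Set L) (G₀ : L)
    (hH : IsBuilding L (G \ {G₀}))
    (F : Finset L) (hF : (F : Set L) = factorsSet (G \ {G₀}) G₀)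
    (S : Finset L) (hS : IsNested (G \ {G₀}) S) (hFS : ¬ F ⊆ S) :
    IsNested G S := by
  refine ⟨fun x hx => (hS.1 hx).1, fun A hA hanti hcard => ?_⟩
  obtain ⟨j, hj, hjH⟩ := hS.2 A hA hanti hcard
  refine ⟨j, hj, fun hjG => hFS ?_⟩
  obtain rfl : j = G₀ := by_contra fun h => hjH ⟨hjG, h⟩
  obtain ⟨a, ha⟩ : A.Nonempty := Finset.card_pos.1 (by omega)
  have hj_ne_bot : j ≠ ⊥ := ne_bot_of_le_ne_bot (hH.1 a (hS.1 (hA ha))) (hj.1 ha)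
  have hAF : A = F :=
    Finset.coe_injective (by rw [hF, hH.coe_eq_factorsSet_of_isLUB hS hA hanti hj_ne_bot hj])
  exact hAF ▸ hA

/-- If `H = G \ {G₀}` is also a building set and `S` is `H`-nested
and does not contain `F_H(G₀)`, then `S` is `G`-nested. -/
theorem stmt14 (L : Type*) [SemilatticeInf L] [OrderBot L] [Fintype L]
    (G : Set L) (G₀ : L) (hG : IsBuilding L G) (hG₀ : G₀ ∈ G)
    (hH : IsBuilding L (G \ {G₀}))
    (F : Finset L) (hF : (F : Set L) = factorsSet (G \ {G₀}) G₀)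
    (S : Finset L) (hS : IsNested (G \ {G₀}) S) (hFS : ¬ F ⊆ S) :
    IsNested G S :=
  stmt14_general L G G₀ hH F hF S hS hFS
end

section
/- Let L be a finite atomic meet-semilattice with atoms A_1,...,A_n, and G a building set in L. Then the collection Σ(L,G) = { V(S) : S ∈ N(L,G) } of cones V(S) = cone{ v_X : X ∈ S } in ℝⁿ, where v_X is the 0/1 characteristic vector of the set of atoms below X, is a simplicial fan whose face poset coincides with the face poset of the nested set complex N(L,G). -/
open scoped BigOperators

variable {L : Type*}

/-!
Every element `X` of a nested set `S` has a private atom, lying below `X` but below no element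
of `S` that is not above `X`: otherwise the maximal elements of `S` strictly below `X` would form
a nested antichain with join `X ∈ G`, while the `G`-factors of `X` are just `X` itself.

Evaluating a positive combination `∑ c_X v_X` over a nested set at all atoms recovers which atoms
lie below its support, hence the upper bounds and the join `j` of the support. The maximal
elements of a nested set are exactly the `G`-factors of its join, so they are determined by the
vector, and at their private atoms the vector reads off their coefficients. Removing them and
inducting shows that the positive representation by a nested set is unique. Uniqueness of
supports gives linear independence (split a relation into its positive and negative parts), the
intersection of cones, and the correspondence between inclusions of cones and of nested sets.
-/

open Classical

lemma le_of_forall_atom_le [PartialOrder L] [OrderBot L]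
    (hAtomic : ∀ X : L, IsLUB {a : L | IsAtom a ∧ a ≤ X} X) {X Y : L}
    (h : ∀ a, IsAtom a → a ≤ X → a ≤ Y) : X ≤ Y :=
  (hAtomic X).2 fun a ha => h a ha.1 ha.2

lemma upperBounds_subset_of_forall_atom [PartialOrder L] [OrderBot L]
    (hAtomic : ∀ X : L, IsLUB {a : L | IsAtom a ∧ a ≤ X} X) {S T : Set L}
    (h : ∀ a, IsAtom a → (∃ Y ∈ T, a ≤ Y) → ∃ X ∈ S, a ≤ X) : upperBounds S ⊆ upperBounds T :=
  fun z hz Y hY => le_of_forall_atom_le hAtomic fun a ha haY => by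
    obtain ⟨X, hX, haX⟩ := h a ha ⟨Y, hY, haY⟩
    exact haX.trans (hz hX)

namespace Finset

variable [PartialOrder L] {S : Finset L}

noncomputable def maxElems (S : Finset L) : Finset L := {x ∈ S | Maximal (· ∈ S) x}

lemma mem_maxElems {x : L} : x ∈ S.maxElems ↔ Maximal (· ∈ S) x := by
  simp only [maxElems, mem_filter, and_iff_right_iff_imp]
  exact Maximal.prop

lemma maxElems_subset : S.maxElems ⊆ S := filter_subset _ _

lemma isAntichain_maxElems : IsAntichain (· ≤ ·) (S.maxElems : Set L) :=
  (setOfPred_maximal_antichain (· ∈ S)).subset fun _ hx => mem_maxElems.1 hx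

lemma exists_mem_maxElems_le {x : L} (hx : x ∈ S) : ∃ m ∈ S.maxElems, x ≤ m := by
  obtain ⟨m, hxm, hm⟩ := S.exists_le_maximal hx
  exact ⟨m, mem_maxElems.2 hm, hxm⟩

lemma maxElems_eq_empty_iff : S.maxElems = ∅ ↔ S = ∅ := by
  refine ⟨fun h => eq_empty_of_forall_notMem fun x hx => ?_, fun h => by simp [h, maxElems]⟩
  obtain ⟨m, hm, -⟩ := exists_mem_maxElems_le hx
  simp [h] at hm

lemma upperBounds_maxElems : upperBounds (S.maxElems : Set L) = upperBounds (S : Set L) := by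
  refine (upperBounds_mono_set fun _ hx => maxElems_subset hx).antisymm' fun z hz x hx => ?_
  obtain ⟨m, hm, hxm⟩ := exists_mem_maxElems_le hx
  exact hxm.trans (hz hm)

end Finset

open Finset

section Factors

variable [PartialOrder L] {G : Set L} {X : L}

lemma exists_mem_factorsSet_le [Finite L] {h : L} (hh : h ∈ G) (hle : h ≤ X) :
    ∃ g ∈ factorsSet G X, h ≤ g := by
  obtain ⟨g, hhg, hg⟩ := Finite.exists_le_maximal (p := fun g => g ∈ G ∧ g ≤ X) ⟨hh, hle⟩
  exact ⟨g, ⟨hg.prop.1, hg.prop.2, fun k hk hkX hgk => hgk.antisymm (hg.2 ⟨hk, hkX⟩ hgk)⟩, hhg⟩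

lemma factorsSet_of_mem (hX : X ∈ G) : factorsSet G X = {X} := by
  ext g
  refine ⟨fun hg => hg.2.2 X hX le_rfl hg.2.1, ?_⟩
  rintro rfl
  exact ⟨hX, le_rfl, fun _ _ h h' => h'.antisymm h⟩

end Factors

section BuildingSet

variable [PartialOrder L] [OrderBot L] {G : Set L} {X : L}

lemma IsBuilding.ne_bot_of_mem_factorsSet (hG : IsBuilding L G) {g : L} (hg : g ∈ factorsSet G X) :
    X ≠ ⊥ := fun hX => hG.1 g hg.1 (le_bot_iff.1 (hX ▸ hg.2.1))

noncomputable def factorUnit (g : factorsSet G X) : (h : factorsSet G X) → Set.Icc (⊥ : L) h.1 :=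
  fun h => if h = g then ⟨h, bot_le, le_rfl⟩ else ⟨⊥, le_rfl, bot_le⟩

lemma IsBuilding.exists_orderIso (hG : IsBuilding L G) (hX : X ≠ ⊥) :
    ∃ φ : ((g : factorsSet G X) → Set.Icc (⊥ : L) g.1) ≃o Set.Icc (⊥ : L) X,
      ∀ g, (φ (factorUnit g) : L) = g := by
  obtain ⟨φ, hφ⟩ := hG.2 X hX
  exact ⟨φ, fun g => hφ g _ (by simp [factorUnit]) fun h hh => by simp [factorUnit, hh]⟩

lemma symm_apply_eq_bot_of_le
    {φ : ((g : factorsSet G X) → Set.Icc (⊥ : L) g.1) ≃o Set.Icc (⊥ : L) X}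
    (hφ : ∀ g, (φ (factorUnit g) : L) = g) {g h : factorsSet G X}
    (hne : h ≠ g) {y : Set.Icc (⊥ : L) X} (hy : (y : L) ≤ g) : (φ.symm y h : L) = ⊥ := by
  have : φ.symm y ≤ factorUnit g := φ.symm_apply_le.2 (by rw [← Subtype.coe_le_coe, hφ]; exact hy)
  have hh := Subtype.coe_le_coe.2 (this h)
  simp only [factorUnit, if_neg hne] at hh
  exact le_bot_iff.1 hh

end BuildingSet

section BuildingSetInf

variable [SemilatticeInf L] [OrderBot L] {G : Set L} {X : L}

lemma IsBuilding.inf_eq_bot_of_mem_factorsSet (hG : IsBuilding L G) {g h : L}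
    (hg : g ∈ factorsSet G X) (hh : h ∈ factorsSet G X) (hne : g ≠ h) : g ⊓ h = ⊥ := by
  obtain ⟨φ, hφ⟩ := hG.exists_orderIso (hG.ne_bot_of_mem_factorsSet hg)
  set y : Set.Icc (⊥ : L) X := ⟨g ⊓ h, bot_le, inf_le_left.trans hg.2.1⟩
  have hy : φ.symm y ≤ φ.symm ⟨⊥, le_rfl, bot_le⟩ := fun k => by
    rw [← Subtype.coe_le_coe]
    by_cases hk : k = ⟨g, hg⟩
    · have hk' : k ≠ ⟨h, hh⟩ := fun e => hne (congrArg Subtype.val (hk.symm.trans e))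
      rw [symm_apply_eq_bot_of_le hφ hk' inf_le_right]
      exact bot_le
    · rw [symm_apply_eq_bot_of_le hφ hk inf_le_left]
      exact bot_le
  exact le_bot_iff.1 (Subtype.coe_le_coe.2 (φ.symm.le_iff_le.1 hy))

lemma IsBuilding.isLUB_inter_Iic [Finite L] (hG : IsBuilding L G) {M : Set L} (hMG : M ⊆ G)
    (hM : IsLUB M X) {g : L} (hg : g ∈ factorsSet G X) : IsLUB (M ∩ Set.Iic g) g := by
  refine ⟨fun m hm => hm.2, fun z hz => ?_⟩
  obtain ⟨φ, hφ⟩ := hG.exists_orderIso (hG.ne_bot_of_mem_factorsSet hg)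
  set g' : factorsSet G X := ⟨g, hg⟩
  set w := φ.symm ⟨z ⊓ g, bot_le, inf_le_right.trans hg.2.1⟩
  let top : (h : factorsSet G X) → Set.Icc (⊥ : L) h.1 := fun h => ⟨h, bot_le, le_rfl⟩
  -- `φ v` bounds `M`, so `v` is the top vector and the `g`-component of `w` is all of `g`
  let v := Function.update top g' (w g')
  have hMv : ∀ m (hm : m ∈ M), φ.symm ⟨m, bot_le, hM.1 hm⟩ ≤ v := by
    intro m hm k
    rcases eq_or_ne k g' with rfl | hk
    · simp only [v, Function.update_self]
      obtain ⟨f, hf, hmf⟩ := exists_mem_factorsSet_le (hMG hm) (hM.1 hm)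
      by_cases hfg : f = g
      · subst hfg
        exact φ.symm.monotone (Subtype.mk_le_mk.2 (le_inf (hz ⟨hm, hmf⟩) hmf)) _
      · rw [← Subtype.coe_le_coe,
          symm_apply_eq_bot_of_le hφ (g := ⟨f, hf⟩)
            (fun e => hfg (congrArg Subtype.val e).symm) hmf]
        exact bot_le
    · simp only [v, Function.update_of_ne hk]
      exact (φ.symm _ k).2.2
  have hXv : φ.symm ⟨X, bot_le, le_rfl⟩ ≤ v :=
    φ.symm_apply_le.2 (hM.2 fun m hm => Subtype.coe_le_coe.2 (φ.symm_apply_le.1 (hMv m hm)))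
  have htop : top ≤ φ.symm ⟨X, bot_le, le_rfl⟩ := φ.le_symm_apply.2 (φ top).2.2
  have hgw : factorUnit g' ≤ w := by
    intro k
    rcases eq_or_ne k g' with rfl | hk
    · simpa [factorUnit, v] using (htop.trans hXv) g'
    · rw [factorUnit, if_neg hk]
      exact Subtype.coe_le_coe.1 bot_le
  calc g = φ (factorUnit g') := (hφ g').symm
    _ ≤ φ w := φ.monotone hgw
    _ = z ⊓ g := by simp [w]
    _ ≤ z := inf_le_left

end BuildingSetInf

section Nested

variable [PartialOrder L] {G : Set L}

lemma IsNested.subset {S T : Finset L} (hS : IsNested G S) (hTS : T ⊆ S) : IsNested G T :=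
  ⟨(coe_subset.2 hTS).trans hS.1, fun A hA => hS.2 A (hA.trans hTS)⟩

lemma IsNested.exists_isLUB [OrderBot L] {S : Finset L} (hS : IsNested G S) :
    ∃ j, IsLUB (S : Set L) j := by
  suffices ∃ j, IsLUB (S.maxElems : Set L) j from
    this.imp fun _ => (isLUB_congr upperBounds_maxElems).1
  by_cases h2 : 2 ≤ #S.maxElems
  · obtain ⟨j, hj, -⟩ := hS.2 _ maxElems_subset isAntichain_maxElems h2
    exact ⟨j, hj⟩
  rcases (by omega : #S.maxElems = 0 ∨ #S.maxElems = 1) with h | h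
  · exact ⟨⊥, by rw [card_eq_zero.1 h, coe_empty]; exact isLUB_empty⟩
  · obtain ⟨x, hx⟩ := card_eq_one.1 h
    exact ⟨x, by rw [hx, coe_singleton]; exact isLUB_singleton⟩

lemma IsNested.eq_of_mem_of_isLUB {C : Finset L} (hC : IsNested G C)
    (hanti : IsAntichain (· ≤ ·) (C : Set L)) {j : L} (hj : IsLUB (C : Set L) j) (hjG : j ∈ G)
    {Y : L} (hY : Y ∈ C) : Y = j := by
  by_cases h2 : 2 ≤ #C
  · obtain ⟨j', hj', hj'G⟩ := hC.2 C subset_rfl hanti h2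
    exact absurd (hj.unique hj' ▸ hjG) hj'G
  · have hCY : ∀ Z ∈ C, Z = Y := fun Z hZ => card_le_one.1 (by omega) Z hZ Y hY
    exact (hj.1 hY).antisymm (hj.2 fun Z hZ => (hCY Z hZ).le)

end Nested

section NestedInf

variable [SemilatticeInf L] [OrderBot L] [Finite L] {G : Set L}

lemma IsNested.coe_eq_factorsSet (hG : IsBuilding L G) {M : Finset L} (hM : IsNested G M)
    (hanti : IsAntichain (· ≤ ·) (M : Set L)) {j : L} (hj : IsLUB (M : Set L) j) :
    (M : Set L) = factorsSet G j := by
  have hfac : ∀ g ∈ factorsSet G j, g ∈ M := by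
    intro g hg
    set N := M.filter (· ≤ g)
    have hN : IsLUB (N : Set L) g := by
      convert hG.isLUB_inter_Iic (fun x hx => hM.1 hx) hj hg using 1
      ext
      simp [N]
    obtain ⟨Y, hY⟩ : N.Nonempty := by
      rw [nonempty_iff_ne_empty]
      intro hN0
      rw [hN0, coe_empty, isLUB_empty_iff] at hN
      exact hG.1 g hg.1 hN.eq_bot
    have hYg : Y = g := (hM.subset (filter_subset _ M)).eq_of_mem_of_isLUB
      (hanti.subset fun _ hx => (mem_filter.1 hx).1) hN hg.1 hY
    exact hYg ▸ (mem_filter.1 hY).1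
  ext m
  refine ⟨fun hm => ?_, hfac m⟩
  obtain ⟨g, hg, hmg⟩ := exists_mem_factorsSet_le (hM.1 hm) (hj.1 hm)
  exact hanti.eq hm (hfac g hg) hmg ▸ hg

lemma IsNested.le_or_le_of_inf_ne_bot (hG : IsBuilding L G) {S : Finset L} (hS : IsNested G S)
    {X Y : L} (hX : X ∈ S) (hY : Y ∈ S) (hXY : X ⊓ Y ≠ ⊥) : X ≤ Y ∨ Y ≤ X := by
  by_contra! h
  have hne : X ≠ Y := fun e => h.1 e.le
  have hP : IsNested G {X, Y} := hS.subset (insert_subset hX (singleton_subset_iff.2 hY))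
  have hanti : IsAntichain (· ≤ ·) (({X, Y} : Finset L) : Set L) := by
    rw [coe_pair]
    exact Set.pairwise_pair.2 fun _ => ⟨h.1, h.2⟩
  obtain ⟨j, hj, -⟩ := hP.2 _ subset_rfl hanti (card_pair hne).ge
  have hfac := hP.coe_eq_factorsSet hG hanti hj
  rw [coe_pair] at hfac
  exact hXY (hG.inf_eq_bot_of_mem_factorsSet (hfac ▸ Set.mem_insert X {Y})
    (hfac ▸ Set.mem_insert_of_mem X rfl) hne)

lemma IsNested.exists_private_atom (hAtomic : ∀ X : L, IsLUB {a : L | IsAtom a ∧ a ≤ X} X)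
    (hG : IsBuilding L G) {S : Finset L} (hS : IsNested G S) {X : L} (hX : X ∈ S) :
    ∃ a, IsAtom a ∧ a ≤ X ∧ ∀ Y ∈ S, a ≤ Y → X ≤ Y := by
  obtain ⟨a, ha, haX, hlt⟩ : ∃ a, IsAtom a ∧ a ≤ X ∧ ∀ Y ∈ S, a ≤ Y → ¬ Y < X := by
    by_contra! h
    set C := (S.filter (· < X)).maxElems
    have hC : IsLUB (C : Set L) X := by
      refine ⟨fun Y hY => (mem_filter.1 (maxElems_subset hY)).2.le,
        fun z hz => le_of_forall_atom_le hAtomic fun a ha haX => ?_⟩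
      obtain ⟨Y, hY, haY, hYX⟩ := h a ha haX
      obtain ⟨m, hm, hYm⟩ := exists_mem_maxElems_le (S := S.filter (· < X)) (mem_filter.2 ⟨hY, hYX⟩)
      exact haY.trans (hYm.trans (hz hm))
    have hCS : IsNested G C := hS.subset (maxElems_subset.trans (filter_subset _ S))
    have hXC : X ∈ (C : Set L) := by
      rw [hCS.coe_eq_factorsSet hG isAntichain_maxElems hC, factorsSet_of_mem (hS.1 hX)]
      rfl
    exact lt_irrefl X (mem_filter.1 (maxElems_subset hXC)).2
  refine ⟨a, ha, haX, fun Y hY haY => ?_⟩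
  rcases hS.le_or_le_of_inf_ne_bot hG hX hY (fun h => ha.1 (le_bot_iff.1 (h ▸ le_inf haX haY)))
    with hXY | hYX
  · exact hXY
  · exact hYX.lt_or_eq.elim (fun h => absurd h (hlt Y hY haY)) ge_of_eq

end NestedInf

section Evaluation

variable [PartialOrder L] [OrderBot L]

lemma sum_smul_charVec_apply (S : Finset L) (c : L → ℝ) (a : Atoms L) :
    (∑ X ∈ S, c X • charVec X) a = ∑ X ∈ S with a.1 ≤ X, c X := by
  rw [Finset.sum_apply, sum_filter]
  refine sum_congr rfl fun X _ => ?_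
  by_cases h : a.1 ≤ X <;> simp [charVec, h]

lemma sum_smul_charVec_apply_pos_iff {S : Finset L} {c : L → ℝ} (hc : ∀ X ∈ S, 0 < c X)
    (a : Atoms L) : 0 < (∑ X ∈ S, c X • charVec X) a ↔ ∃ X ∈ S, a.1 ≤ X := by
  rw [sum_smul_charVec_apply, sum_pos_iff_of_nonneg fun X hX => (hc X (mem_filter.1 hX).1).le]
  constructor
  · rintro ⟨X, hX, -⟩
    exact ⟨X, mem_filter.1 hX⟩
  · rintro ⟨X, hX, haX⟩
    exact ⟨X, mem_filter.2 ⟨hX, haX⟩, hc X hX⟩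

lemma upperBounds_eq_of_sum_smul_charVec_eq
    (hAtomic : ∀ X : L, IsLUB {a : L | IsAtom a ∧ a ≤ X} X) {S T : Finset L} {c d : L → ℝ}
    (hc : ∀ X ∈ S, 0 < c X) (hd : ∀ Y ∈ T, 0 < d Y)
    (h : ∑ X ∈ S, c X • charVec X = ∑ Y ∈ T, d Y • charVec Y) :
    upperBounds (S : Set L) = upperBounds (T : Set L) := by
  have hatoms : ∀ a, IsAtom a → ((∃ X ∈ S, a ≤ X) ↔ ∃ Y ∈ T, a ≤ Y) := fun a ha => by
    rw [← sum_smul_charVec_apply_pos_iff hc ⟨a, ha⟩, ← sum_smul_charVec_apply_pos_iff hd ⟨a, ha⟩,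
      h]
  exact (upperBounds_subset_of_forall_atom hAtomic fun a ha => (hatoms a ha).2).antisymm
    (upperBounds_subset_of_forall_atom hAtomic fun a ha => (hatoms a ha).1)

end Evaluation

section Uniqueness

variable [SemilatticeInf L] [OrderBot L] [Finite L] {G : Set L}

lemma IsNested.maxElems_eq (hG : IsBuilding L G) {S T : Finset L} (hS : IsNested G S)
    (hT : IsNested G T) (h : upperBounds (S : Set L) = upperBounds (T : Set L)) :
    S.maxElems = T.maxElems := by
  obtain ⟨j, hj⟩ := hS.exists_isLUB
  have hmax : ∀ {U : Finset L}, IsNested G U → IsLUB (U : Set L) j →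
      (U.maxElems : Set L) = factorsSet G j := fun hU hUj =>
    (hU.subset maxElems_subset).coe_eq_factorsSet hG isAntichain_maxElems
      ((isLUB_congr upperBounds_maxElems).2 hUj)
  exact coe_injective ((hmax hS hj).trans (hmax hT ((isLUB_congr h).1 hj)).symm)

lemma IsNested.le_of_sum_smul_charVec_eq (hAtomic : ∀ X : L, IsLUB {a : L | IsAtom a ∧ a ≤ X} X)
    (hG : IsBuilding L G) {S T : Finset L} (hS : IsNested G S) {c d : L → ℝ}
    (hd : ∀ Y ∈ T, 0 ≤ d Y) (h : ∑ X ∈ S, c X • charVec X = ∑ Y ∈ T, d Y • charVec Y) {X : L}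
    (hXS : X ∈ S.maxElems) (hXT : X ∈ T) : d X ≤ c X := by
  obtain ⟨a, ha, haX, hpriv⟩ := hS.exists_private_atom hAtomic hG (maxElems_subset hXS)
  have hSa : (∑ X ∈ S, c X • charVec X) ⟨a, ha⟩ = c X := by
    refine (sum_smul_charVec_apply S c ⟨a, ha⟩).trans
      (sum_eq_single_of_mem X (mem_filter.2 ⟨maxElems_subset hXS, haX⟩) fun Y hY hYX => ?_)
    obtain ⟨hYS, haY⟩ := mem_filter.1 hY
    exact absurd ((mem_maxElems.1 hXS).eq_of_ge hYS (hpriv Y hYS haY)) hYX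
  calc d X ≤ ∑ Y ∈ T with a ≤ Y, d Y :=
        single_le_sum (fun Y hY => hd Y (mem_filter.1 hY).1) (mem_filter.2 ⟨hXT, haX⟩)
    _ = c X := by rw [← sum_smul_charVec_apply T d ⟨a, ha⟩, ← h, hSa]

theorem IsNested.eq_of_sum_smul_charVec_eq
    (hAtomic : ∀ X : L, IsLUB {a : L | IsAtom a ∧ a ≤ X} X) (hG : IsBuilding L G)
    {S T : Finset L} (hS : IsNested G S) (hT : IsNested G T) {c d : L → ℝ}
    (hc : ∀ X ∈ S, 0 < c X) (hd : ∀ Y ∈ T, 0 < d Y)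
    (h : ∑ X ∈ S, c X • charVec X = ∑ Y ∈ T, d Y • charVec Y) : S = T := by
  induction S using Finset.strongInduction generalizing T with
  | H S ih =>
  set M := S.maxElems
  have hM : M = T.maxElems :=
    hS.maxElems_eq hG hT (upperBounds_eq_of_sum_smul_charVec_eq hAtomic hc hd h)
  rcases M.eq_empty_or_nonempty with hM0 | hMne
  · rw [(maxElems_eq_empty_iff (S := S)).1 hM0, (maxElems_eq_empty_iff (S := T)).1 (hM ▸ hM0)]
  have hMS : M ⊆ S := maxElems_subset
  have hMT : M ⊆ T := hM ▸ maxElems_subset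
  have hcd : ∀ X ∈ M, c X = d X := fun X hX => le_antisymm
    (hT.le_of_sum_smul_charVec_eq hAtomic hG (fun X hX => (hc X hX).le) h.symm (hM ▸ hX) (hMS hX))
    (hS.le_of_sum_smul_charVec_eq hAtomic hG (fun Y hY => (hd Y hY).le) h hX (hMT hX))
  have hrest : ∑ X ∈ S \ M, c X • charVec X = ∑ Y ∈ T \ M, d Y • charVec Y := by
    have hMsum : ∑ X ∈ M, c X • charVec X = ∑ X ∈ M, d X • charVec X :=
      sum_congr rfl fun X hX => by rw [hcd X hX]
    rw [← sum_sdiff (f := fun X => c X • charVec X) hMS,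
      ← sum_sdiff (f := fun Y => d Y • charVec Y) hMT, hMsum] at h
    exact add_right_cancel h
  have hST := ih (S \ M) (sdiff_ssubset hMS hMne) (hS.subset sdiff_subset) (hT.subset sdiff_subset)
    (fun X hX => hc X (mem_sdiff.1 hX).1) (fun Y hY => hd Y (mem_sdiff.1 hY).1) hrest
  calc S = S \ M ∪ M := (sdiff_union_of_subset hMS).symm
    _ = T \ M ∪ M := by rw [hST]
    _ = T := sdiff_union_of_subset hMT

lemma IsNested.filter_ne_zero_eq_of_sum_smul_charVec_eq
    (hAtomic : ∀ X : L, IsLUB {a : L | IsAtom a ∧ a ≤ X} X) (hG : IsBuilding L G)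
    {S T : Finset L} (hS : IsNested G S) (hT : IsNested G T) {c d : L → ℝ}
    (hc : ∀ x, 0 ≤ c x) (hd : ∀ x, 0 ≤ d x)
    (h : ∑ X ∈ S, c X • charVec X = ∑ Y ∈ T, d Y • charVec Y) :
    {X ∈ S | c X ≠ 0} = {Y ∈ T | d Y ≠ 0} := by
  have hfilter : ∀ (U : Finset L) (e : L → ℝ),
      ∑ X ∈ U with e X ≠ 0, e X • charVec X = ∑ X ∈ U, e X • charVec X :=
    fun U e => sum_filter_of_ne fun X _ hX he => hX (by rw [he, zero_smul])
  refine (hS.subset (filter_subset _ S)).eq_of_sum_smul_charVec_eq hAtomic hG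
    (hT.subset (filter_subset _ T)) (fun X hX => (hc X).lt_of_ne' (mem_filter.1 hX).2)
    (fun Y hY => (hd Y).lt_of_ne' (mem_filter.1 hY).2) ?_
  rw [hfilter, hfilter, h]

end Uniqueness

section Cones

variable [SemilatticeInf L] [OrderBot L] {G : Set L}

lemma coneOf_mono [DecidableEq L] {S T : Finset L} (h : S ⊆ T) : coneOf S ⊆ coneOf T := by
  rintro y ⟨c, hc, rfl⟩
  refine ⟨fun x => if x ∈ S then c x else 0, fun x => ite_nonneg (hc x) le_rfl, ?_⟩
  simp only [ite_smul, zero_smul, sum_ite_mem, inter_eq_right.2 h]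

lemma IsNested.linearIndependent_charVec [Finite L]
    (hAtomic : ∀ X : L, IsLUB {a : L | IsAtom a ∧ a ≤ X} X) (hG : IsBuilding L G)
    {S : Finset L} (hS : IsNested G S) :
    LinearIndependent ℝ (fun x : {x : L // x ∈ S} => charVec x.1) := by
  rw [Fintype.linearIndependent_iff]
  intro g hg i
  set c : L → ℝ := fun x => if hx : x ∈ S then g ⟨x, hx⟩ else 0
  have hc : ∑ X ∈ S, c X • charVec X = 0 := by
    rw [← hg, ← sum_coe_sort S]
    exact sum_congr rfl fun x _ => by simp [c]
  have hpm : ∑ X ∈ S, (c X)⁺ • charVec X = ∑ X ∈ S, (c X)⁻ • charVec X := by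
    rw [← sub_eq_zero, ← sum_sub_distrib]
    simpa only [← sub_smul, posPart_sub_negPart] using hc
  have hsupp := hS.filter_ne_zero_eq_of_sum_smul_charVec_eq hAtomic hG hS
    (fun x => posPart_nonneg (c x)) (fun x => negPart_nonneg (c x)) hpm
  have hci : c i = g i := by simp [c]
  have hsign : 0 < c i ↔ c i < 0 := by
    simpa only [mem_filter, i.2, true_and, ne_eq, posPart_eq_zero, negPart_eq_zero, not_le,
      eq_iff_iff] using congrArg (i.1 ∈ ·) hsupp
  rw [← hci]
  exact le_antisymm (not_lt.1 fun h => lt_asymm h (hsign.1 h))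
    (not_lt.1 fun h => lt_asymm h (hsign.2 h))

lemma IsNested.coneOf_inter [Finite L] [DecidableEq L]
    (hAtomic : ∀ X : L, IsLUB {a : L | IsAtom a ∧ a ≤ X} X) (hG : IsBuilding L G)
    {S T : Finset L} (hS : IsNested G S) (hT : IsNested G T) :
    coneOf S ∩ coneOf T = coneOf (S ∩ T) := by
  refine subset_antisymm ?_
    (Set.subset_inter (coneOf_mono inter_subset_left) (coneOf_mono inter_subset_right))
  rintro y ⟨⟨c, hc, rfl⟩, d, hd, h⟩
  have hsupp := hS.filter_ne_zero_eq_of_sum_smul_charVec_eq hAtomic hG hT hc hd h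
  refine ⟨c, hc, (sum_subset inter_subset_left fun X hXS hXST => ?_).symm⟩
  suffices c X = 0 by rw [this, zero_smul]
  by_contra hX
  have hXT : X ∈ {Y ∈ T | d Y ≠ 0} := hsupp ▸ mem_filter.2 ⟨hXS, hX⟩
  exact hXST (mem_inter.2 ⟨hXS, (mem_filter.1 hXT).1⟩)

lemma IsNested.coneOf_subset_coneOf_iff [Finite L] [DecidableEq L]
    (hAtomic : ∀ X : L, IsLUB {a : L | IsAtom a ∧ a ≤ X} X) (hG : IsBuilding L G)
    {S T : Finset L} (hS : IsNested G S) (hT : IsNested G T) :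
    coneOf S ⊆ coneOf T ↔ S ⊆ T := by
  refine ⟨fun h X hX => ?_, coneOf_mono⟩
  have hsingle : 0 ≤ (Pi.single X 1 : L → ℝ) := Pi.single_nonneg.2 zero_le_one
  obtain ⟨d, hd, hXd⟩ := h ⟨Pi.single X 1, hsingle, rfl⟩
  have hsupp := hS.filter_ne_zero_eq_of_sum_smul_charVec_eq hAtomic hG hT hsingle hd hXd
  have hXS : X ∈ {Y ∈ S | (Pi.single X 1 : L → ℝ) Y ≠ 0} := mem_filter.2 ⟨hX, by simp⟩
  exact (mem_filter.1 (hsupp ▸ hXS)).1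

end Cones

/-- For a finite atomic meet-semilattice `L` and building set `G`,
the collection `Σ(L,G) = {V(S) : S ∈ N(L,G)}` of cones spanned by
characteristic vectors is a simplicial fan whose face poset coincides with
the face poset of `N(L,G)`: the generating vectors of each cone are linearly
independent, cones intersect in the cone of the common subface, cone
inclusion corresponds to face inclusion, and the complex is closed under
subsets. -/
theorem stmt16 (L : Type*) [SemilatticeInf L] [OrderBot L] [Fintype L] [DecidableEq L]
    (hAtomic : ∀ X : L, IsLUB {a : L | IsAtom a ∧ a ≤ X} X)
    (G : Set L) (hG : IsBuilding L G) :
    (∀ S : Finset L, IsNested G S →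
      LinearIndependent ℝ (fun x : {x : L // x ∈ S} => charVec x.1)) ∧
    (∀ S T : Finset L, IsNested G S → IsNested G T →
      coneOf S ∩ coneOf T = coneOf (S ∩ T)) ∧
    (∀ S T : Finset L, IsNested G S → IsNested G T →
      (coneOf (L := L) S ⊆ coneOf T ↔ S ⊆ T)) ∧
    (∀ S T : Finset L, IsNested G S → T ⊆ S → IsNested G T) :=
  ⟨fun _ hS => hS.linearIndependent_charVec hAtomic hG,
    fun _ _ hS hT => hS.coneOf_inter hAtomic hG hT,
    fun _ _ hS hT => hS.coneOf_subset_coneOf_iff hAtomic hG hT,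
    fun _ _ hS hTS => hS.subset hTS⟩
end

section
/- Let L be a finite lattice and G a building set in L containing the top element 1̂. Then the nested set complex N(L,G) is the simplicial cone with apex {1̂} over the subcomplex of faces not containing 1̂, and this base subcomplex equals the nested set complex N(L \ {1̂}, G \ {1̂}) of the meet-semilattice L \ {1̂} with respect to the building set G \ {1̂}. -/
open scoped BigOperators

variable {L : Type*}

/-- For a finite lattice `L` and a building set `G ∋ ⊤`, the nested
set complex `N(L,G)` is a cone with apex `⊤`, and its base (the faces not
containing `⊤`) equals the nested set complex of the meet-semilattice
`L \ {⊤}` with respect to the building set `G \ {⊤}`. -/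
theorem stmt19 (L : Type*) [Lattice L] [BoundedOrder L] [Fintype L] [DecidableEq L]
    (G : Set L) (hG : IsBuilding L G) (hT : ⊤ ∈ G) :
    (∀ S : Finset L, IsNested G S → IsNested G (insert ⊤ S)) ∧
    (∀ S : Finset L, ⊤ ∉ S →
      (IsNested G S ↔
        ∃ S' : Finset {x : L // x ≠ ⊤},
          IsNested {g : {x : L // x ≠ ⊤} | (g : L) ∈ G} S' ∧
          S = S'.image Subtype.val)) := by
  constructor
  · intro S hS
    constructor
    · intro x hx
      rw [Finset.coe_insert] at hx
      rcases hx with rfl | hx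
      · exact hT
      · exact hS.1 hx
    · intro A hA hanti hcard
      have hTA : (⊤ : L) ∉ A := by
        intro hTinA
        obtain ⟨x, hxA, hxT⟩ : ∃ x ∈ A, x ≠ ⊤ := by
          by_contra h
          push_neg at h
          have hsub : A ⊆ {⊤} := fun y hy => Finset.mem_singleton.mpr (h y hy)
          have := Finset.card_le_card hsub
          simp at this
          omega
        exact hanti (Finset.mem_coe.mpr hxA) (Finset.mem_coe.mpr hTinA) hxT le_top
      have hAS : A ⊆ S := by
        intro a ha
        rcases Finset.mem_insert.mp (hA ha) with rfl | h
        · exact absurd ha hTA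
        · exact h
      exact hS.2 A hAS hanti hcard
  · intro S hTS
    have hne : ∀ x ∈ S, x ≠ ⊤ := fun x hx h => hTS (h ▸ hx)
    constructor
    · intro hS
      refine ⟨S.subtype (· ≠ ⊤), ⟨?_, ?_⟩, ?_⟩
      · intro g hg
        simp only [Finset.mem_coe, Finset.mem_subtype] at hg
        exact hS.1 hg
      · intro A' hA' hanti' hcard'
        set A : Finset L := A'.image Subtype.val with hAdef
        have hAsub : A ⊆ S := by
          intro a ha
          obtain ⟨a', ha', rfl⟩ := Finset.mem_image.mp ha
          have := hA' ha'
          simpa [Finset.mem_subtype] using this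
        have hanti : IsAntichain (· ≤ ·) (A : Set L) := by
          intro x hx y hy hxy hle
          obtain ⟨x', hx', rfl⟩ := Finset.mem_image.mp (Finset.mem_coe.mp hx)
          obtain ⟨y', hy', rfl⟩ := Finset.mem_image.mp (Finset.mem_coe.mp hy)
          exact hanti' (Finset.mem_coe.mpr hx') (Finset.mem_coe.mpr hy')
            (fun h => hxy (congrArg Subtype.val h)) hle
        have hcard : 2 ≤ A.card := by
          rw [hAdef, Finset.card_image_of_injective _ Subtype.val_injective]
          exact hcard'
        obtain ⟨j, hj, hjG⟩ := hS.2 A hAsub hanti hcard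
        have hjT : j ≠ ⊤ := fun h => hjG (h ▸ hT)
        refine ⟨⟨j, hjT⟩, ⟨?_, ?_⟩, hjG⟩
        · intro a' ha'
          exact Subtype.coe_le_coe.mp
            (hj.1 (Finset.mem_coe.mpr (Finset.mem_image_of_mem _ (Finset.mem_coe.mp ha'))))
        · intro b' hb'
          have hb : j ≤ b'.1 := hj.2 (by
            intro a ha
            obtain ⟨a', ha', rfl⟩ := Finset.mem_image.mp (Finset.mem_coe.mp ha)
            exact hb' (Finset.mem_coe.mpr ha'))
          exact Subtype.coe_le_coe.mp hb
      · ext x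
        simp only [Finset.mem_image, Finset.mem_subtype]
        constructor
        · intro hx; exact ⟨⟨x, hne x hx⟩, hx, rfl⟩
        · rintro ⟨⟨y, hy⟩, hyS, rfl⟩; exact hyS
    · rintro ⟨S', hS', hSeq⟩
      subst hSeq
      refine ⟨?_, ?_⟩
      · intro x hx
        obtain ⟨x', hx', rfl⟩ := Finset.mem_image.mp (Finset.mem_coe.mp hx)
        exact hS'.1 (Finset.mem_coe.mpr hx')
      · intro A hA hanti hcard
        have hAne : ∀ a ∈ A, a ≠ ⊤ := by
          intro a ha h
          obtain ⟨a', _, heq⟩ := Finset.mem_image.mp (hA ha)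
          exact a'.2 (heq.trans h)
        set A' : Finset {x : L // x ≠ ⊤} := A.subtype (· ≠ ⊤) with hA'def
        have hmemA' : ∀ a (h : a ≠ ⊤), (⟨a, h⟩ : {x : L // x ≠ ⊤}) ∈ A' ↔ a ∈ A := by
          intro a h; simp [hA'def, Finset.mem_subtype]
        have hA'sub : A' ⊆ S' := by
          intro a' ha'
          have haA : (a' : L) ∈ A := by
            rcases a' with ⟨a, h⟩; exact (hmemA' a h).mp ha'
          obtain ⟨b', hb', hbeq⟩ := Finset.mem_image.mp (hA haA)
          have : b' = a' := Subtype.ext hbeq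
          exact this ▸ hb'
        have hanti' : IsAntichain (· ≤ ·) (A' : Set {x : L // x ≠ ⊤}) := by
          rintro ⟨x, hx⟩ hx' ⟨y, hy⟩ hy' hxy hle
          have hxA : x ∈ A := (hmemA' x hx).mp (Finset.mem_coe.mp hx')
          have hyA : y ∈ A := (hmemA' y hy).mp (Finset.mem_coe.mp hy')
          exact hanti (Finset.mem_coe.mpr hxA) (Finset.mem_coe.mpr hyA)
            (fun h => hxy (Subtype.ext h)) hle
        have hcard' : 2 ≤ A'.card := by
          have : A'.card = A.card := by
            rw [hA'def, Finset.card_subtype, Finset.filter_true_of_mem hAne]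
          omega
        obtain ⟨j', hj', hj'G⟩ := hS'.2 A' hA'sub hanti' hcard'
        refine ⟨j'.1, ⟨?_, ?_⟩, hj'G⟩
        · intro a ha
          have haA := Finset.mem_coe.mp ha
          have : (⟨a, hAne a haA⟩ : {x : L // x ≠ ⊤}) ∈ A' := (hmemA' a _).mpr haA
          exact Subtype.coe_le_coe.mpr (hj'.1 (Finset.mem_coe.mpr this))
        · intro b hb
          by_cases hbT : b = ⊤
          · exact le_of_le_of_eq le_top hbT.symm
          · have : j' ≤ ⟨b, hbT⟩ := hj'.2 (by
              rintro ⟨a, haT⟩ ha'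
              have haA : a ∈ A := (hmemA' a haT).mp (Finset.mem_coe.mp ha')
              exact Subtype.coe_le_coe.mpr (hb (Finset.mem_coe.mpr haA)))
            exact Subtype.coe_le_coe.mpr this
end
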